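/- arXiv:2102.03723 — 3 statements merged into one kernel-verified Lean document; each statement's English description precedes it below -/
import Mathlib

section
/- (Hyperbolic centering) Let x₁, ..., x_N ∈ 𝕃^d and define m_x = (1/√(-[x̄, x̄])) · (1/N) Σₙ 𝒫(xₙ), where x̄ = (1/N) Σₙ xₙ. Then (1/N) Σₙ 𝒫(R_{-m_x} xₙ) = 0, i.e., translating by -m_x centers the projected point set at the origin. -/
/-! Since `R_b` is linear, the averaged projection is `𝒫 (R_{-m_x} x̄)`. The spatial part of
a point of `𝕃^d` is shorter than its time coordinate, so by the triangle inequality `x̄` is future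
timelike; hence `y = x̄ / √(-[x̄, x̄])` lies on `𝕃^d` and `m_x = 𝒫 y`. Finally `R_{-𝒫 y}` sends `y`
to the base point, because `(I + b bᵀ)^{1/2}` scales `b` by `√(1 + ‖b‖²)`, which for `b = 𝒫 y`
is `y₀`. -/

open Matrix BigOperators

noncomputable section

/-- The Lorentzian signature matrix H = diag(-1, 1, ..., 1). -/
def Hm (d : ℕ) : Matrix (Fin (d+1)) (Fin (d+1)) ℝ :=
  Matrix.diagonal (fun i => if i = 0 then -1 else 1)

/-- The Lorentzian inner product [x, y] = xᵀ H y. -/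
def lprod {d : ℕ} (x y : Fin (d+1) → ℝ) : ℝ := x ⬝ᵥ (Hm d).mulVec y

/-- The 'Loid model of hyperbolic space. -/
def Loid (d : ℕ) : Set (Fin (d+1) → ℝ) := {x | lprod x x = -1 ∧ 0 < x 0}

/-- The projection dropping the first coordinate. -/
def Pproj {d : ℕ} (x : Fin (d+1) → ℝ) : Fin d → ℝ := fun i => x i.succ

/-- The lift z ↦ (√(1+‖z‖²), z). -/
def Qlift {d : ℕ} (z : Fin d → ℝ) : Fin (d+1) → ℝ :=
  Fin.cons (Real.sqrt (1 + ∑ i, z i ^ 2)) z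

/-- The positive semidefinite square root of I + b bᵀ (explicit formula;
for b = 0 the coefficient is 0 by division-by-zero convention, giving I). -/
def sqrtIbb {d : ℕ} (b : Fin d → ℝ) : Matrix (Fin d) (Fin d) ℝ :=
  1 + ((Real.sqrt (1 + ∑ i, b i ^ 2) - 1) / (∑ i, b i ^ 2)) • Matrix.vecMulVec b b

/-- The hyperbolic rotation matrix R_U = [[1, 0ᵀ], [0, U]]. -/
def RU {d : ℕ} (U : Matrix (Fin d) (Fin d) ℝ) : Matrix (Fin (d+1)) (Fin (d+1)) ℝ :=
  Matrix.of (Fin.cons (Fin.cons 1 0) (fun i => Fin.cons 0 (U i)))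

/-- The hyperbolic translation matrix R_b = [[√(1+‖b‖²), bᵀ], [b, (I + b bᵀ)^{1/2}]]. -/
def Rb {d : ℕ} (b : Fin d → ℝ) : Matrix (Fin (d+1)) (Fin (d+1)) ℝ :=
  Matrix.of (Fin.cons (Fin.cons (Real.sqrt (1 + ∑ i, b i ^ 2)) b)
    (fun i => Fin.cons (b i) (sqrtIbb b i)))

/-- The hyperbolic centroid parameter m_x = (1/√(-[x̄,x̄])) · (1/N) Σₙ 𝒫(xₙ). -/
def centroid {d N : ℕ} (x : Fin N → (Fin (d+1) → ℝ)) : Fin d → ℝ :=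
  (1 / Real.sqrt (-(lprod ((N:ℝ)⁻¹ • ∑ n, x n) ((N:ℝ)⁻¹ • ∑ n, x n)))) •
    ((N:ℝ)⁻¹ • ∑ n, Pproj (x n))

lemma Pproj_smul {d : ℕ} (c : ℝ) (x : Fin (d+1) → ℝ) : Pproj (c • x) = c • Pproj x := rfl

lemma Pproj_sum {d : ℕ} {ι : Type*} (s : Finset ι) (x : ι → Fin (d+1) → ℝ) :
    Pproj (∑ n ∈ s, x n) = ∑ n ∈ s, Pproj (x n) := by
  ext i
  simp [Pproj, Finset.sum_apply]

lemma norm_toLp_sq {d : ℕ} (z : Fin d → ℝ) : ‖WithLp.toLp 2 z‖ ^ 2 = ∑ i, z i ^ 2 :=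
  EuclideanSpace.real_norm_sq_eq _

lemma lprod_self {d : ℕ} (x : Fin (d+1) → ℝ) :
    lprod x x = -x 0 ^ 2 + ∑ i, Pproj x i ^ 2 := by
  simp only [lprod, Hm, dotProduct, mulVec_diagonal, Fin.sum_univ_succ, Pproj]
  simp [Fin.succ_ne_zero, sq]

lemma lprod_smul_smul {d : ℕ} (c : ℝ) (x : Fin (d+1) → ℝ) :
    lprod (c • x) (c • x) = c ^ 2 * lprod x x := by
  simp only [lprod, mulVec_smul, smul_dotProduct, dotProduct_smul, smul_eq_mul]
  ring

lemma apply_zero_eq_sqrt_of_mem_Loid {d : ℕ} {y : Fin (d+1) → ℝ} (hy : y ∈ Loid d) :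
    y 0 = √(1 + ∑ i, Pproj y i ^ 2) := by
  obtain ⟨hyy, hy0⟩ := hy
  rw [lprod_self] at hyy
  rw [← Real.sqrt_sq hy0.le]
  congr 1
  linarith

lemma norm_Pproj_lt_of_mem_Loid {d : ℕ} {y : Fin (d+1) → ℝ} (hy : y ∈ Loid d) :
    ‖WithLp.toLp 2 (Pproj y)‖ < y 0 := by
  rw [apply_zero_eq_sqrt_of_mem_Loid hy, Real.lt_sqrt (norm_nonneg _), norm_toLp_sq]
  linarith

lemma norm_Pproj_sum_lt {d : ℕ} {ι : Type*} {s : Finset ι} (hs : s.Nonempty)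
    {x : ι → Fin (d+1) → ℝ} (hx : ∀ n ∈ s, ‖WithLp.toLp 2 (Pproj (x n))‖ < x n 0) :
    ‖WithLp.toLp 2 (Pproj (∑ n ∈ s, x n))‖ < (∑ n ∈ s, x n) 0 := by
  rw [Pproj_sum, WithLp.toLp_sum, Finset.sum_apply]
  exact (norm_sum_le _ _).trans_lt (Finset.sum_lt_sum_of_nonempty hs hx)

lemma norm_Pproj_smul_lt {d : ℕ} {c : ℝ} (hc : 0 < c) {x : Fin (d+1) → ℝ}
    (hx : ‖WithLp.toLp 2 (Pproj x)‖ < x 0) :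
    ‖WithLp.toLp 2 (Pproj (c • x))‖ < (c • x) 0 := by
  rw [Pproj_smul, WithLp.toLp_smul, norm_smul, Real.norm_of_nonneg hc.le, Pi.smul_apply,
    smul_eq_mul]
  exact mul_lt_mul_of_pos_left hx hc

lemma neg_lprod_self_pos {d : ℕ} {x : Fin (d+1) → ℝ}
    (hx : ‖WithLp.toLp 2 (Pproj x)‖ < x 0) : 0 < -lprod x x := by
  rw [lprod_self, ← norm_toLp_sq]
  nlinarith [norm_nonneg (WithLp.toLp 2 (Pproj x))]

lemma smul_mem_Loid_of_norm_Pproj_lt {d : ℕ} {x : Fin (d+1) → ℝ}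
    (hx : ‖WithLp.toLp 2 (Pproj x)‖ < x 0) :
    (√(-lprod x x))⁻¹ • x ∈ Loid d := by
  have hneg := neg_lprod_self_pos hx
  have hρ : 0 < √(-lprod x x) := Real.sqrt_pos.2 hneg
  refine ⟨?_, ?_⟩
  · have hne : lprod x x ≠ 0 := by linarith
    rw [lprod_smul_smul, inv_pow, Real.sq_sqrt hneg.le]
    field_simp
  · simpa using mul_pos (inv_pos.2 hρ) ((norm_nonneg _).trans_lt hx)

lemma Pproj_Rb_mulVec {d : ℕ} (b : Fin d → ℝ) (v : Fin (d+1) → ℝ) :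
    Pproj (Rb b *ᵥ v) = v 0 • b + sqrtIbb b *ᵥ Pproj v := by
  ext i
  simp [Pproj, Rb, mulVec, dotProduct, Fin.sum_univ_succ, mul_comm]

lemma sqrtIbb_mulVec_self {d : ℕ} (b : Fin d → ℝ) :
    sqrtIbb b *ᵥ b = √(1 + ∑ i, b i ^ 2) • b := by
  have hbb : b ⬝ᵥ b = ∑ i, b i ^ 2 := by simp [dotProduct, sq]
  have hc : (√(1 + ∑ i, b i ^ 2) - 1) / (∑ i, b i ^ 2) * ∑ i, b i ^ 2
      = √(1 + ∑ i, b i ^ 2) - 1 := by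
    rcases eq_or_ne (∑ i, b i ^ 2) 0 with hs | hs
    · simp [hs]
    · field_simp
  rw [sqrtIbb, add_mulVec, one_mulVec, smul_mulVec, vecMulVec_mulVec, op_smul_eq_smul, hbb,
    smul_smul, hc, sub_smul, one_smul, add_sub_cancel]

lemma Pproj_Rb_neg_Pproj_mulVec_self {d : ℕ} {y : Fin (d+1) → ℝ} (hy : y ∈ Loid d) :
    Pproj (Rb (-Pproj y) *ᵥ y) = 0 := by
  have hz : sqrtIbb (-Pproj y) *ᵥ Pproj y = y 0 • Pproj y := by
    have h := sqrtIbb_mulVec_self (-Pproj y)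
    simp only [mulVec_neg, smul_neg, neg_inj, Pi.neg_apply, neg_sq] at h
    rw [h, ← apply_zero_eq_sqrt_of_mem_Loid hy]
  rw [Pproj_Rb_mulVec, hz, smul_neg, neg_add_cancel]

lemma centroid_eq {d N : ℕ} (x : Fin N → (Fin (d+1) → ℝ)) :
    centroid x = Pproj ((√(-lprod ((N:ℝ)⁻¹ • ∑ n, x n) ((N:ℝ)⁻¹ • ∑ n, x n)))⁻¹ •
      ((N:ℝ)⁻¹ • ∑ n, x n)) := by
  rw [centroid, Pproj_smul, Pproj_smul, Pproj_sum, one_div]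

theorem stmt_13 (d N : ℕ) (hN : 0 < N) (x : Fin N → (Fin (d+1) → ℝ))
    (hx : ∀ n, x n ∈ Loid d) :
    (N:ℝ)⁻¹ • ∑ n, Pproj ((Rb (-(centroid x))).mulVec (x n)) = 0 := by
  set X := (N:ℝ)⁻¹ • ∑ n, x n
  have hX : ‖WithLp.toLp 2 (Pproj X)‖ < X 0 :=
    norm_Pproj_smul_lt (by positivity) (norm_Pproj_sum_lt ⟨⟨0, hN⟩, Finset.mem_univ _⟩
      fun n _ => norm_Pproj_lt_of_mem_Loid (hx n))
  set ρ := √(-lprod X X)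
  have hρ : ρ ≠ 0 := (Real.sqrt_pos.2 (neg_lprod_self_pos hX)).ne'
  calc (N:ℝ)⁻¹ • ∑ n, Pproj (Rb (-centroid x) *ᵥ x n)
      = Pproj (Rb (-Pproj (ρ⁻¹ • X)) *ᵥ X) := by
        rw [centroid_eq, ← Pproj_sum, ← Pproj_smul, ← mulVec_sum, ← mulVec_smul]
    _ = ρ • Pproj (Rb (-Pproj (ρ⁻¹ • X)) *ᵥ (ρ⁻¹ • X)) := by
        rw [← Pproj_smul, ← mulVec_smul, smul_inv_smul₀ hρ]
    _ = 0 := by rw [Pproj_Rb_neg_Pproj_mulVec_self (smul_mem_Loid_of_norm_Pproj_lt hX), smul_zero]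
end
end

section
/- Every matrix R satisfying R^T H R = H with positive (1,1) entry admits a decomposition R = R_U R_b for some U ∈ O(d) and b ∈ ℝ^d, where R_U = [[1,0],[0,U]] and R_b is the hyperbolic translation matrix. -/
open Matrix BigOperators

noncomputable section

/-!
Write `R = [[α, bᵀ], [c, M]]`. As `H² = 1`, `RᵀHR = H` makes `HRᵀH` the inverse of `R`, hence
also `RHRᵀ = H`. The blocks of these two identities read `‖c‖² = ‖b‖² = α² - 1`, `M b = α c`,
`Mᵀ c = α b` and `MᵀM = I + b bᵀ`, which make `U = M - c bᵀ / (α + 1)` orthogonal with `U b = c`.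
Since `α = √(1 + ‖b‖²)`, the square root of `I + b bᵀ` is `I + b bᵀ / (α + 1)`, so
`U (I + b bᵀ)^{1/2} = M`, and `R_U R_b` has the four blocks of `R`.
-/

section Blocks

variable {X : Type*} {m n : ℕ} (A : Matrix (Fin (m+1)) (Fin (n+1)) X)

def topRow : Fin n → X := fun j => A 0 j.succ

def leftCol : Fin m → X := fun i => A i.succ 0

def lowerBlock : Matrix (Fin m) (Fin n) X := A.submatrix Fin.succ Fin.succ

theorem lowerBlock_transpose : lowerBlock Aᵀ = (lowerBlock A)ᵀ := rfl

theorem eq_of_blocks :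
    A = of (Fin.cons (Fin.cons (A 0 0) (topRow A))
      fun i => Fin.cons (leftCol A i) (lowerBlock A i)) := by
  ext i j
  cases i using Fin.cases <;> cases j using Fin.cases <;> rfl

end Blocks

theorem Hm_mul_Hm (d : ℕ) : Hm d * Hm d = 1 := by
  rw [Hm, diagonal_mul_diagonal, ← diagonal_one]
  congr 1
  funext i
  split_ifs <;> norm_num

theorem transpose_mul_Hm_mul_apply {d : ℕ} (A : Matrix (Fin (d+1)) (Fin (d+1)) ℝ)
    (i j : Fin (d+1)) :
    (Aᵀ * Hm d * A) i j = -(A 0 i * A 0 j) + ∑ k : Fin d, A k.succ i * A k.succ j := by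
  rw [Matrix.mul_assoc]
  simp [Matrix.mul_apply, Hm, diagonal_apply, Fin.sum_univ_succ, Fin.succ_ne_zero]

theorem mul_mul_transpose_eq_of_transpose_mul_mul_eq {n R : Type*} [Fintype n] [DecidableEq n]
    [CommRing R] {A J : Matrix n n R} (hJ : J * J = 1) (hA : Aᵀ * J * A = J) :
    A * J * Aᵀ = J := by
  have hinv : A * (J * Aᵀ * J) = 1 :=
    mul_eq_one_comm.mp <| by rw [Matrix.mul_assoc, Matrix.mul_assoc, ← Matrix.mul_assoc Aᵀ, hA, hJ]
  calc A * J * Aᵀ = A * (J * Aᵀ * J) * J := by simp only [Matrix.mul_assoc, hJ, Matrix.mul_one]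
    _ = J := by rw [hinv, Matrix.one_mul]

section LorentzBlocks

variable {d : ℕ} {A : Matrix (Fin (d+1)) (Fin (d+1)) ℝ}

theorem leftCol_dotProduct_self_of_lorentz (hA : Aᵀ * Hm d * A = Hm d) :
    leftCol A ⬝ᵥ leftCol A = A 0 0 ^ 2 - 1 := by
  have h := transpose_mul_Hm_mul_apply A 0 0
  rw [hA] at h
  simp only [Hm, diagonal_apply_eq, if_pos] at h
  simp only [dotProduct, leftCol]
  linarith

theorem leftCol_vecMul_lowerBlock_of_lorentz (hA : Aᵀ * Hm d * A = Hm d) :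
    leftCol A ᵥ* lowerBlock A = A 0 0 • topRow A := by
  ext j
  have h := transpose_mul_Hm_mul_apply A 0 j.succ
  rw [hA] at h
  simp only [Hm, diagonal_apply_ne _ (Fin.succ_ne_zero j).symm] at h
  simp only [vecMul, dotProduct, leftCol, lowerBlock, topRow, submatrix_apply, Pi.smul_apply,
    smul_eq_mul]
  linarith

theorem lowerBlock_transpose_mul_self_of_lorentz (hA : Aᵀ * Hm d * A = Hm d) :
    (lowerBlock A)ᵀ * lowerBlock A = 1 + vecMulVec (topRow A) (topRow A) := by
  ext i j
  have h := transpose_mul_Hm_mul_apply A i.succ j.succ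
  rw [hA] at h
  simp only [Hm, diagonal_apply, Fin.succ_inj, Fin.succ_ne_zero, if_false] at h
  simp only [mul_apply, transpose_apply, lowerBlock, topRow, submatrix_apply, Matrix.add_apply,
    one_apply, vecMulVec_apply]
  linarith

end LorentzBlocks

section BlockAlgebra

variable {K n : Type*} [Field K] [Fintype n] {a : K} {b c : n → K} {M : Matrix n n K}

theorem transpose_mul_self_sub_smul_vecMulVec [DecidableEq n] (ha : a + 1 ≠ 0)
    (hc : c ⬝ᵥ c = a ^ 2 - 1) (hcM : c ᵥ* M = a • b) (hMM : Mᵀ * M = 1 + vecMulVec b b) :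
    (M - (a + 1)⁻¹ • vecMulVec c b)ᵀ * (M - (a + 1)⁻¹ • vecMulVec c b) = 1 := by
  have hNM : vecMulVec b c * M = a • vecMulVec b b := by
    rw [vecMulVec_mul, hcM, vecMulVec_smul]
  have hMN : Mᵀ * vecMulVec c b = a • vecMulVec b b := by
    rw [mul_vecMulVec, mulVec_transpose, hcM, smul_vecMulVec]
  have hNN : vecMulVec b c * vecMulVec c b = (a ^ 2 - 1) • vecMulVec b b := by
    rw [vecMulVec_mul_vecMulVec, hc, vecMulVec_smul]
  simp only [transpose_sub, transpose_smul, transpose_vecMulVec, sub_mul, mul_sub, smul_mul,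
    Matrix.mul_smul, hNM, hMN, hNN, hMM, smul_smul]
  match_scalars <;> field_simp; ring

theorem sub_smul_vecMulVec_mulVec (ha : a + 1 ≠ 0) (hb : b ⬝ᵥ b = a ^ 2 - 1)
    (hMb : M *ᵥ b = a • c) :
    (M - (a + 1)⁻¹ • vecMulVec c b) *ᵥ b = c := by
  simp only [sub_mulVec, smul_mulVec, vecMulVec_mulVec, op_smul_eq_smul, hMb, hb, smul_smul]
  match_scalars
  field_simp
  ring

theorem sub_smul_vecMulVec_mul_one_add [DecidableEq n] (ha : a + 1 ≠ 0)
    (hb : b ⬝ᵥ b = a ^ 2 - 1) (hMb : M *ᵥ b = a • c) :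
    (M - (a + 1)⁻¹ • vecMulVec c b) * (1 + (a + 1)⁻¹ • vecMulVec b b) = M := by
  rw [Matrix.mul_add, Matrix.mul_one, Matrix.mul_smul, mul_vecMulVec,
    sub_smul_vecMulVec_mulVec ha hb hMb, sub_add_cancel]

end BlockAlgebra

theorem sum_sq_eq_dotProduct {n : Type*} [Fintype n] (b : n → ℝ) : ∑ i, b i ^ 2 = b ⬝ᵥ b := by
  simp only [dotProduct, sq]

/-- Rationalizing `(√(1 + s) - 1) / s` removes the division by `s = ‖b‖²`. -/
theorem sqrtIbb_eq {d : ℕ} (b : Fin d → ℝ) :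
    sqrtIbb b = 1 + (√(1 + b ⬝ᵥ b) + 1)⁻¹ • vecMulVec b b := by
  rw [sqrtIbb, sum_sq_eq_dotProduct]
  by_cases hb : b ⬝ᵥ b = 0
  · simp [dotProduct_self_eq_zero.mp hb]
  · have hsq : √(1 + b ⬝ᵥ b) ^ 2 = 1 + b ⬝ᵥ b :=
      Real.sq_sqrt (by rw [← sum_sq_eq_dotProduct]; positivity)
    congr 2
    field_simp
    linear_combination hsq

theorem RU_mul_Rb {d : ℕ} (U : Matrix (Fin d) (Fin d) ℝ) (b : Fin d → ℝ) :
    RU U * Rb b = of (Fin.cons (Fin.cons √(1 + b ⬝ᵥ b) b)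
      fun i => Fin.cons ((U *ᵥ b) i) ((U * sqrtIbb b) i)) := by
  ext i j
  cases i using Fin.cases <;> cases j using Fin.cases <;>
    simp [RU, Rb, mul_apply, mulVec, dotProduct, Fin.sum_univ_succ, sum_sq_eq_dotProduct]

theorem stmt_14 (d : ℕ) (R : Matrix (Fin (d+1)) (Fin (d+1)) ℝ)
    (hR : Rᵀ * Hm d * R = Hm d) (hpos : 0 < R 0 0) :
    ∃ (U : Matrix (Fin d) (Fin d) ℝ) (b : Fin d → ℝ),
      Uᵀ * U = 1 ∧ R = RU U * Rb b := by
  have hRt : Rᵀᵀ * Hm d * Rᵀ = Hm d := by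
    rw [transpose_transpose]
    exact mul_mul_transpose_eq_of_transpose_mul_mul_eq (Hm_mul_Hm d) hR
  have ha : R 0 0 + 1 ≠ 0 := by positivity
  have hb : topRow R ⬝ᵥ topRow R = R 0 0 ^ 2 - 1 := leftCol_dotProduct_self_of_lorentz hRt
  have hMb : lowerBlock R *ᵥ topRow R = R 0 0 • leftCol R := by
    rw [← vecMul_transpose, ← lowerBlock_transpose]
    exact leftCol_vecMul_lowerBlock_of_lorentz hRt
  have hsqrt : √(1 + topRow R ⬝ᵥ topRow R) = R 0 0 := by
    rw [hb, add_sub_cancel, Real.sqrt_sq hpos.le]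
  refine ⟨lowerBlock R - (R 0 0 + 1)⁻¹ • vecMulVec (leftCol R) (topRow R), topRow R,
    transpose_mul_self_sub_smul_vecMulVec ha (leftCol_dotProduct_self_of_lorentz hR)
      (leftCol_vecMul_lowerBlock_of_lorentz hR) (lowerBlock_transpose_mul_self_of_lorentz hR), ?_⟩
  rw [RU_mul_Rb, sqrtIbb_eq, hsqrt, sub_smul_vecMulVec_mulVec ha hb hMb,
    sub_smul_vecMulVec_mul_one_add ha hb hMb]
  exact eq_of_blocks R
end
end

section
/- (Optimal hyperbolic rotation) Let y₁,...,y_N and y'₁,...,y'_N be points in 𝕃^d and w₁,...,w_N > 0. The matrix V ∈ O(d) minimizing Σₙ wₙ cosh(d(yₙ, R_V y'ₙ)) = Σₙ wₙ (-[yₙ, R_V y'ₙ]) is V̂ = U_l U_r^T, where U_l Σ U_r^T is a singular value decomposition of 𝒫(Y) W 𝒫(Y')^T with W = diag(w₁,...,w_N) and 𝒫 dropping the first coordinate of each column. -/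
open Matrix BigOperators

noncomputable section

/-- Expansion of the Lorentzian product. -/
lemma lprod_eq {d : ℕ} (x z : Fin (d+1) → ℝ) :
    lprod x z = -(x 0 * z 0) + ∑ i : Fin d, x i.succ * z i.succ := by
  simp [lprod, Hm, Matrix.mulVec_diagonal, dotProduct, Fin.sum_univ_succ, Fin.succ_ne_zero]

lemma RU_mulVec_zero {d : ℕ} (V : Matrix (Fin d) (Fin d) ℝ) (z : Fin (d+1) → ℝ) :
    (RU V).mulVec z 0 = z 0 := by
  simp [RU, Matrix.mulVec, dotProduct, Fin.sum_univ_succ]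

lemma RU_mulVec_succ {d : ℕ} (V : Matrix (Fin d) (Fin d) ℝ) (z : Fin (d+1) → ℝ) (i : Fin d) :
    (RU V).mulVec z i.succ = ∑ j, V i j * Pproj z j := by
  simp [RU, Matrix.mulVec, dotProduct, Fin.sum_univ_succ, Pproj]

lemma lprod_RU {d : ℕ} (V : Matrix (Fin d) (Fin d) ℝ) (x z : Fin (d+1) → ℝ) :
    lprod x ((RU V).mulVec z) =
      -(x 0 * z 0) + ∑ i, ∑ j, Pproj x i * V i j * Pproj z j := by
  rw [lprod_eq, RU_mulVec_zero]
  congr 1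
  refine Finset.sum_congr rfl fun i _ => ?_
  rw [RU_mulVec_succ, Finset.mul_sum]
  exact Finset.sum_congr rfl fun j _ => by simp [Pproj]; ring

lemma diag_le_one {d : ℕ} (M : Matrix (Fin d) (Fin d) ℝ) (h : Mᵀ * M = 1) (i : Fin d) :
    M i i ≤ 1 := by
  have h1 : ∑ k, M k i * M k i = 1 := by
    have := congrFun (congrFun h i) i
    simpa [Matrix.mul_apply, Matrix.transpose_apply, Matrix.one_apply] using this
  have h2 : M i i * M i i ≤ 1 := by
    rw [← h1]
    exact Finset.single_le_sum (f := fun k => M k i * M k i)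
      (fun k _ => mul_self_nonneg _) (Finset.mem_univ i)
  nlinarith

/-- The objective as a weighted diagonal sum. -/
lemma trace_form {d : ℕ} (Ul Ur V : Matrix (Fin d) (Fin d) ℝ) (σ : Fin d → ℝ) :
    ∑ i, ∑ j, (Ul * Matrix.diagonal σ * Urᵀ) i j * V i j
      = ∑ i, σ i * (Urᵀ * Vᵀ * Ul) i i := by
  have t1 : ∑ i, ∑ j, (Ul * Matrix.diagonal σ * Urᵀ) i j * V i j
      = Matrix.trace (Ul * Matrix.diagonal σ * Urᵀ * Vᵀ) := by
    simp [Matrix.trace, Matrix.diag, Matrix.mul_apply, Matrix.transpose_apply]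
  have t2 : Matrix.trace (Ul * Matrix.diagonal σ * Urᵀ * Vᵀ)
      = Matrix.trace (Matrix.diagonal σ * (Urᵀ * Vᵀ * Ul)) := by
    rw [show Ul * Matrix.diagonal σ * Urᵀ * Vᵀ = Ul * (Matrix.diagonal σ * (Urᵀ * Vᵀ)) from by
      simp [Matrix.mul_assoc], Matrix.trace_mul_comm]
    simp [Matrix.mul_assoc]
  rw [t1, t2]
  simp [Matrix.trace, Matrix.diag, Matrix.diagonal_mul]

lemma sum_entry_le {d : ℕ} (Ul Ur V : Matrix (Fin d) (Fin d) ℝ) (σ : Fin d → ℝ)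
    (hUl : Ulᵀ * Ul = 1) (hUr : Urᵀ * Ur = 1) (hV : Vᵀ * V = 1) (hσ : ∀ i, 0 ≤ σ i) :
    ∑ i, ∑ j, (Ul * Matrix.diagonal σ * Urᵀ) i j * V i j ≤ ∑ i, σ i := by
  have hVV : V * Vᵀ = 1 := mul_eq_one_comm.mp hV
  have hUrr : Ur * Urᵀ = 1 := mul_eq_one_comm.mp hUr
  set M : Matrix (Fin d) (Fin d) ℝ := Urᵀ * Vᵀ * Ul with hMdef
  have hM : Mᵀ * M = 1 := by
    have : (Urᵀ * Vᵀ * Ul)ᵀ * (Urᵀ * Vᵀ * Ul) = Ulᵀ * (V * ((Ur * Urᵀ) * (Vᵀ * Ul))) := by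
      simp [Matrix.transpose_mul, Matrix.mul_assoc]
    rw [hMdef, this, hUrr, Matrix.one_mul,
      show Ulᵀ * (V * (Vᵀ * Ul)) = Ulᵀ * ((V * Vᵀ) * Ul) from by simp [Matrix.mul_assoc],
      hVV, Matrix.one_mul, hUl]
  rw [trace_form]
  exact Finset.sum_le_sum fun i _ => by
    calc σ i * M i i ≤ σ i * 1 := mul_le_mul_of_nonneg_left (diag_le_one M hM i) (hσ i)
    _ = σ i := mul_one _

lemma sum_entry_eq {d : ℕ} (Ul Ur : Matrix (Fin d) (Fin d) ℝ) (σ : Fin d → ℝ)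
    (hUl : Ulᵀ * Ul = 1) (hUr : Urᵀ * Ur = 1) :
    ∑ i, ∑ j, (Ul * Matrix.diagonal σ * Urᵀ) i j * (Ul * Urᵀ) i j = ∑ i, σ i := by
  rw [trace_form]
  have hM : Urᵀ * (Ul * Urᵀ)ᵀ * Ul = 1 := by
    have : Urᵀ * (Ul * Urᵀ)ᵀ * Ul = (Urᵀ * Ur) * (Ulᵀ * Ul) := by
      simp [Matrix.transpose_mul, Matrix.mul_assoc]
    rw [this, hUl, hUr, Matrix.one_mul]
  rw [hM]
  simp [Matrix.one_apply]

theorem stmt_17 (d N : ℕ)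
    (y y' : Fin N → (Fin (d+1) → ℝ))
    (hy : ∀ n, y n ∈ Loid d) (hy' : ∀ n, y' n ∈ Loid d)
    (w : Fin N → ℝ) (hw : ∀ n, 0 < w n)
    (Ul Ur : Matrix (Fin d) (Fin d) ℝ) (σ : Fin d → ℝ)
    (hUl : Ulᵀ * Ul = 1) (hUr : Urᵀ * Ur = 1) (hσ : ∀ i, 0 ≤ σ i)
    (hsvd : (Matrix.of fun i j => ∑ n, w n * Pproj (y n) i * Pproj (y' n) j) =
      Ul * Matrix.diagonal σ * Urᵀ) :
    ∀ V : Matrix (Fin d) (Fin d) ℝ, Vᵀ * V = 1 →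
      ∑ n, w n * (-(lprod (y n) ((RU (Ul * Urᵀ)).mulVec (y' n)))) ≤
      ∑ n, w n * (-(lprod (y n) ((RU V).mulVec (y' n)))) := by
  intro V hV
  have key : ∀ (W : Matrix (Fin d) (Fin d) ℝ),
      ∑ n, w n * (-(lprod (y n) ((RU W).mulVec (y' n)))) =
      (∑ n, w n * (y n 0 * y' n 0)) -
        ∑ i, ∑ j, (∑ n, w n * Pproj (y n) i * Pproj (y' n) j) * W i j := by
    intro W
    have h1 : ∀ n, w n * (-(lprod (y n) ((RU W).mulVec (y' n)))) =
        w n * (y n 0 * y' n 0)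
          - ∑ i, ∑ j, w n * Pproj (y n) i * Pproj (y' n) j * W i j := by
      intro n
      have h2 : ∑ i, ∑ j, w n * Pproj (y n) i * Pproj (y' n) j * W i j
          = w n * ∑ i, ∑ j, Pproj (y n) i * W i j * Pproj (y' n) j := by
        rw [Finset.mul_sum]
        refine Finset.sum_congr rfl fun i _ => ?_
        rw [Finset.mul_sum]
        exact Finset.sum_congr rfl fun j _ => by ring
      rw [lprod_RU, h2]; ring
    rw [Finset.sum_congr rfl fun n _ => h1 n, Finset.sum_sub_distrib]
    congr 1
    rw [Finset.sum_comm]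
    refine Finset.sum_congr rfl fun i _ => ?_
    rw [Finset.sum_comm]
    exact Finset.sum_congr rfl fun j _ => by rw [Finset.sum_mul]
  have hA : ∀ i j, (∑ n, w n * Pproj (y n) i * Pproj (y' n) j)
      = (Ul * Matrix.diagonal σ * Urᵀ) i j := fun i j => congrFun (congrFun hsvd i) j
  rw [key V, key (Ul * Urᵀ)]
  have e1 : ∑ i, ∑ j, (∑ n, w n * Pproj (y n) i * Pproj (y' n) j) * V i j
      = ∑ i, ∑ j, (Ul * Matrix.diagonal σ * Urᵀ) i j * V i j := by
    exact Finset.sum_congr rfl fun i _ => Finset.sum_congr rfl fun j _ => by rw [hA]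
  have e2 : ∑ i, ∑ j, (∑ n, w n * Pproj (y n) i * Pproj (y' n) j) * (Ul * Urᵀ) i j
      = ∑ i, ∑ j, (Ul * Matrix.diagonal σ * Urᵀ) i j * (Ul * Urᵀ) i j := by
    exact Finset.sum_congr rfl fun i _ => Finset.sum_congr rfl fun j _ => by rw [hA]
  rw [e1, e2, sum_entry_eq Ul Ur σ hUl hUr]
  have := sum_entry_le Ul Ur V σ hUl hUr hV hσ
  linarith
end
end
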